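/- In the commutative ring R = C[L, W³, W⁴, W⁵, C³, D³, C⁵, D⁵]/I, where I contains the elements (W⁵)², (W⁴)³, (W³)³ - (8/27)L W³ W⁴ + (1/108)L² W⁵ - (1/1296)W⁴ W⁵, (C⁵)², (D⁵)², and C³D³ + 117(W³)² - 33 L W⁴ - L³, the elements W³, W⁴, W⁵, C⁵, D⁵ are nilpotent, and in the quotient of R by its nilradical the relation C³D³ = L³ holds. If additionally the quotient of R by its nilradical is the ring C[L, C³, D³]/(C³D³ - L³), then it is isomorphic to the invariant ring C[β¹, β²]^{Z/3Z} where the generator of Z/3Z acts by β¹ ↦ e^{2πi/3} β¹, β² ↦ e^{-2πi/3} β². -/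

import Mathlib

/-!
STATEMENT 19: In `R = ℂ[L, W³, W⁴, W⁵, C³, D³, C⁵, D⁵]/I` where `I` contains
`(W⁵)²`, `(W⁴)³`, `(W³)³ - (8/27)L W³ W⁴ + (1/108)L² W⁵ - (1/1296)W⁴ W⁵`,
`(C⁵)²`, `(D⁵)²`, and `C³D³ + 117(W³)² - 33 L W⁴ - L³`, the elements
`W³, W⁴, W⁵, C⁵, D⁵` are nilpotent, and modulo the nilradical `C³D³ = L³`.
If moreover `R/nilradical ≅ ℂ[L,C³,D³]/(C³D³ - L³)` then `R/nilradical` is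
isomorphic to the invariant ring `ℂ[β¹,β²]^{ℤ/3ℤ}`, where the generator of `ℤ/3ℤ`
acts by `β¹ ↦ e^{2πi/3} β¹`, `β² ↦ e^{-2πi/3} β²` (i.e. `β² ↦ ζ² β²`).
Variables: `X 0 = L`, `X 1 = W³`, `X 2 = W⁴`, `X 3 = W⁵`, `X 4 = C³`, `X 5 = D³`,
`X 6 = C⁵`, `X 7 = D⁵`.
-/

noncomputable section

open MvPolynomial

/-- The cuspidal-cone ring `ℂ[x,y,z]/(yz - x³)`. -/
abbrev ConeRing := MvPolynomial (Fin 3) ℂ ⧸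
  (Ideal.span {MvPolynomial.X 1 * MvPolynomial.X 2 - (MvPolynomial.X 0) ^ 3} :
    Ideal (MvPolynomial (Fin 3) ℂ))

/-- The cube root of unity `ζ = e^{2πi/3}`. -/
def zeta : ℂ := Complex.exp (2 * Real.pi * Complex.I / 3)

/-- The order-3 automorphism `β¹ ↦ ζ β¹`, `β² ↦ ζ² β²` of `ℂ[β¹,β²]`. -/
def theta3 : MvPolynomial (Fin 2) ℂ →ₐ[ℂ] MvPolynomial (Fin 2) ℂ :=
  MvPolynomial.aeval (fun i : Fin 2 =>
    if i = 0 then zeta • MvPolynomial.X 0 else (zeta ^ 2) • MvPolynomial.X 1)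

/-- The invariant ring `ℂ[β¹,β²]^{ℤ/3ℤ}`. -/
def invariants3 : Subalgebra ℂ (MvPolynomial (Fin 2) ℂ) :=
  AlgHom.equalizer theta3 (AlgHom.id ℂ (MvPolynomial (Fin 2) ℂ))

/-!
Modulo nilpotents `W⁴` and `W⁵` vanish, so the cubic relation forces `(W³)³ ≡ 0`, and then the
last relation reads `C³D³ ≡ L³`.

The map `x ↦ β¹β², y ↦ (β¹)³, z ↦ (β²)³` sends the monomial `xᵃyᵇzᶜ` to
`(β¹)^(a+3b) (β²)^(a+3c)`; these are exactly the monomials `(β¹)ⁱ(β²)ʲ` with `i ≡ j mod 3`,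
i.e. those fixed by `β¹ ↦ ζβ¹, β² ↦ ζ²β²`, so its image is the invariant ring. Modulo
`yz - x³` every polynomial is congruent to one of `x`-degree `< 3`, and on those the exponent map
is injective, so the kernel is `(yz - x³)`.
-/

theorem span_le_nilradical {A : Type*} [CommSemiring A] {s : Set A}
    (hs : ∀ x ∈ s, IsNilpotent x) : Ideal.span s ≤ nilradical A :=
  Ideal.span_le.2 fun x hx => mem_nilradical.2 (hs x hx)

theorem isNilpotent_mk_of_pow_mem {A : Type*} [CommRing A] {I : Ideal A} {x : A} {n : ℕ}
    (h : x ^ n ∈ I) : IsNilpotent (Ideal.Quotient.mk I x) :=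
  ⟨n, by rwa [← map_pow, Ideal.Quotient.eq_zero_iff_mem]⟩

section Relations

variable {K A : Type*} [CommRing K] [CommRing A] [Algebra K A]

theorem pow_three_mem_span_pair_of_relation {l w₃ w₄ w₅ : A} (a b c : K)
    (h : w₃ ^ 3 - a • (l * w₃ * w₄) + b • (l ^ 2 * w₅) - c • (w₄ * w₅) = 0) :
    w₃ ^ 3 ∈ Ideal.span {w₄, w₅} :=
  Ideal.mem_span_pair.2 ⟨a • (l * w₃) + c • w₅, -(b • l ^ 2), by
    simp only [Algebra.smul_def] at h ⊢
    linear_combination -h⟩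

theorem mul_sub_pow_three_mem_span_pair_of_relation {c₃ d₃ l w₃ w₄ : A} (a b : K)
    (h : c₃ * d₃ + a • w₃ ^ 2 - b • (l * w₄) - l ^ 3 = 0) :
    c₃ * d₃ - l ^ 3 ∈ Ideal.span {w₃, w₄} :=
  Ideal.mem_span_pair.2 ⟨-(a • w₃), b • l, by
    simp only [Algebra.smul_def] at h ⊢
    linear_combination -h⟩

end Relations

section ConeMap

variable (R : Type*) [CommRing R]

def coneMap : MvPolynomial (Fin 3) R →ₐ[R] MvPolynomial (Fin 2) R :=
  aeval ![X 0 * X 1, X 0 ^ 3, X 1 ^ 3]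

def coneNormalForms : Submodule R (MvPolynomial (Fin 3) R) :=
  restrictSupport R {d | d 0 < 3}

variable {R}

def coneExponent (d : Fin 3 →₀ ℕ) : Fin 2 →₀ ℕ :=
  Finsupp.single 0 (d 0 + 3 * d 1) + Finsupp.single 1 (d 0 + 3 * d 2)

theorem monomial_fin_two_eq (d : Fin 2 →₀ ℕ) (c : R) :
    monomial d c = C c * X 0 ^ d 0 * X 1 ^ d 1 := by
  rw [monomial_eq, Finsupp.prod_fintype _ _ fun _ => pow_zero _, Fin.prod_univ_two, mul_assoc]

theorem monomial_fin_three_eq (d : Fin 3 →₀ ℕ) (c : R) :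
    monomial d c = C c * X 0 ^ d 0 * X 1 ^ d 1 * X 2 ^ d 2 := by
  rw [monomial_eq, Finsupp.prod_fintype _ _ fun _ => pow_zero _, Fin.prod_univ_three]
  ring

theorem coneExponent_apply_zero (d : Fin 3 →₀ ℕ) : coneExponent d 0 = d 0 + 3 * d 1 := by
  simp [coneExponent]

theorem coneExponent_apply_one (d : Fin 3 →₀ ℕ) : coneExponent d 1 = d 0 + 3 * d 2 := by
  simp [coneExponent]

theorem coneExponent_eq_iff {d : Fin 3 →₀ ℕ} {e : Fin 2 →₀ ℕ} :
    coneExponent d = e ↔ d 0 + 3 * d 1 = e 0 ∧ d 0 + 3 * d 2 = e 1 := by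
  rw [Finsupp.ext_iff, Fin.forall_fin_two, coneExponent_apply_zero, coneExponent_apply_one]

theorem coneMap_monomial (d : Fin 3 →₀ ℕ) (c : R) :
    coneMap R (monomial d c) = monomial (coneExponent d) c := by
  rw [monomial_fin_three_eq, monomial_fin_two_eq, coneExponent_apply_zero,
    coneExponent_apply_one]
  simp only [coneMap, map_mul, map_pow, aeval_C, aeval_X, algebraMap_eq, Matrix.cons_val_zero,
    Matrix.cons_val_one, Matrix.cons_val_two, Matrix.tail_cons, Matrix.head_cons]
  ring

theorem coneMap_eq_sum (p : MvPolynomial (Fin 3) R) :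
    coneMap R p = ∑ d ∈ p.support, monomial (coneExponent d) (coeff d p) := by
  conv_lhs => rw [p.as_sum]
  simp only [map_sum, coneMap_monomial]

theorem coneExponent_injOn : Set.InjOn coneExponent {d : Fin 3 →₀ ℕ | d 0 < 3} := by
  intro d hd d' hd' h
  rw [coneExponent_eq_iff, coneExponent_apply_zero, coneExponent_apply_one] at h
  rw [Set.mem_ofPred_eq] at hd hd'
  ext i
  match i with
  | 0 | 1 | 2 => omega

theorem coeff_coneMap_coneExponent {p : MvPolynomial (Fin 3) R}
    (hp : p ∈ coneNormalForms R) {d : Fin 3 →₀ ℕ} (hd : d 0 < 3) :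
    coeff (coneExponent d) (coneMap R p) = coeff d p := by
  rw [coneMap_eq_sum, coeff_sum, Finset.sum_eq_single d]
  · simp
  · intro e he hne
    rw [coeff_monomial, if_neg fun h => hne (coneExponent_injOn (hp he) hd h)]
  · intro hd'
    rw [coeff_monomial, if_pos rfl, notMem_support_iff.1 hd']

theorem eq_zero_of_coneMap_eq_zero {p : MvPolynomial (Fin 3) R}
    (hp : p ∈ coneNormalForms R) (h : coneMap R p = 0) : p = 0 := by
  ext d
  by_cases hd : d ∈ p.support
  · rw [← coeff_coneMap_coneExponent hp (hp hd), h, coeff_zero, coeff_zero]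
  · rwa [notMem_support_iff] at hd

theorem monomial_sub_normalForm_mem_span (d : Fin 3 →₀ ℕ) (c : R) :
    monomial d c - monomial (Finsupp.single 0 (d 0 % 3) + Finsupp.single 1 (d 0 / 3 + d 1)
      + Finsupp.single 2 (d 0 / 3 + d 2)) c ∈ Ideal.span {X 1 * X 2 - X 0 ^ 3} := by
  set s := d 0 % 3
  set m := d 0 / 3
  have hd : d 0 = s + 3 * m := (Nat.mod_add_div _ _).symm
  have key : monomial d c - monomial (Finsupp.single 0 s + Finsupp.single 1 (m + d 1)
      + Finsupp.single 2 (m + d 2)) c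
      = -(C c * X 0 ^ s * X 1 ^ d 1 * X 2 ^ d 2) * ((X 1 * X 2) ^ m - (X 0 ^ 3) ^ m) := by
    rw [monomial_fin_three_eq, monomial_fin_three_eq, hd]
    simp only [Finsupp.coe_add, Pi.add_apply, Finsupp.single_apply, Fin.reduceEq, ↓reduceIte,
      add_zero, zero_add]
    ring
  rw [key, Ideal.mem_span_singleton]
  exact (sub_dvd_pow_sub_pow _ _ m).mul_left _

theorem exists_normalForm_sub_mem_span (p : MvPolynomial (Fin 3) R) :
    ∃ r ∈ coneNormalForms R, p - r ∈ Ideal.span {X 1 * X 2 - X 0 ^ 3} := by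
  induction p using MvPolynomial.induction_on' with
  | monomial d c =>
    refine ⟨_, ?_, monomial_sub_normalForm_mem_span d c⟩
    simp [coneNormalForms, Nat.mod_lt]
  | add p q hp hq =>
    obtain ⟨r, hr, hpr⟩ := hp
    obtain ⟨r', hr', hqr'⟩ := hq
    exact ⟨r + r', add_mem hr hr', by simpa [add_sub_add_comm] using add_mem hpr hqr'⟩

theorem ker_coneMap : RingHom.ker (coneMap R) = Ideal.span {X 1 * X 2 - X 0 ^ 3} := by
  have hle : Ideal.span {X 1 * X 2 - X 0 ^ 3} ≤ RingHom.ker (coneMap R) := by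
    rw [Ideal.span_le, Set.singleton_subset_iff, SetLike.mem_coe, RingHom.mem_ker]
    simp only [coneMap, map_sub, map_mul, map_pow, aeval_X, Matrix.cons_val_zero,
      Matrix.cons_val_one, Matrix.cons_val_two, Matrix.tail_cons, Matrix.head_cons]
    ring
  refine le_antisymm (fun p hp => ?_) hle
  obtain ⟨r, hr, hpr⟩ := exists_normalForm_sub_mem_span p
  have hr₀ : coneMap R r = 0 := by
    simpa [RingHom.mem_ker.1 hp] using RingHom.mem_ker.1 (hle hpr)
  simpa [eq_zero_of_coneMap_eq_zero hr hr₀] using hpr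

end ConeMap

theorem zeta_isPrimitiveRoot : IsPrimitiveRoot zeta 3 := by
  simpa [zeta] using Complex.isPrimitiveRoot_exp 3 (by norm_num)

theorem theta3_monomial (d : Fin 2 →₀ ℕ) (c : ℂ) :
    theta3 (monomial d c) = monomial d (zeta ^ (d 0 + 2 * d 1) * c) := by
  rw [monomial_fin_two_eq, monomial_fin_two_eq]
  simp only [theta3, map_mul, map_pow, aeval_C, aeval_X, algebraMap_eq, smul_eq_C_mul, ↓reduceIte,
    one_ne_zero]
  ring

theorem coeff_theta3 (d : Fin 2 →₀ ℕ) (f : MvPolynomial (Fin 2) ℂ) :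
    coeff d (theta3 f) = zeta ^ (d 0 + 2 * d 1) * coeff d f := by
  induction f using MvPolynomial.induction_on' with
  | monomial e c =>
    rw [theta3_monomial, coeff_monomial, coeff_monomial]
    split_ifs with h
    · rw [h]
    · rw [mul_zero]
  | add f g hf hg => rw [map_add, coeff_add, coeff_add, hf, hg, mul_add]

theorem mem_invariants3_iff (f : MvPolynomial (Fin 2) ℂ) :
    f ∈ invariants3 ↔ f ∈ restrictSupport ℂ {d | 3 ∣ d 0 + 2 * d 1} := by
  rw [mem_restrictSupport_iff, invariants3, AlgHom.mem_equalizer, AlgHom.id_apply]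
  simp only [MvPolynomial.ext_iff, coeff_theta3, mul_left_eq_self₀, Set.subset_def, Finset.mem_coe,
    mem_support_iff, Set.mem_ofPred_eq, ← zeta_isPrimitiveRoot.pow_eq_one_iff_dvd]
  exact forall_congr' fun d => or_iff_not_imp_right

theorem range_coneExponent :
    Set.range coneExponent = {e : Fin 2 →₀ ℕ | 3 ∣ e 0 + 2 * e 1} := by
  ext e
  rw [Set.mem_range, Set.mem_ofPred_eq]
  constructor
  · rintro ⟨d, hd⟩
    rw [coneExponent_eq_iff] at hd
    omega
  · intro he
    by_cases hle : e 1 ≤ e 0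
    · refine ⟨Finsupp.single 0 (e 1) + Finsupp.single 1 ((e 0 - e 1) / 3),
        coneExponent_eq_iff.2 ?_⟩
      simp only [Finsupp.coe_add, Pi.add_apply, Finsupp.single_apply, Fin.reduceEq, ↓reduceIte,
        add_zero, zero_add]
      omega
    · refine ⟨Finsupp.single 0 (e 0) + Finsupp.single 2 ((e 1 - e 0) / 3),
        coneExponent_eq_iff.2 ?_⟩
      simp only [Finsupp.coe_add, Pi.add_apply, Finsupp.single_apply, Fin.reduceEq, ↓reduceIte,
        add_zero, zero_add]
      omega

theorem range_coneMap : (coneMap ℂ).range = invariants3 := by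
  ext f
  rw [mem_invariants3_iff]
  constructor
  · rw [AlgHom.mem_range]
    rintro ⟨p, rfl⟩
    rw [coneMap_eq_sum]
    refine Submodule.sum_mem _ fun d _ => ?_
    rw [monomial_mem_restrictSupport, ← range_coneExponent]
    exact Or.inl ⟨d, rfl⟩
  · intro hf
    rw [f.as_sum]
    refine Subalgebra.sum_mem _ fun e he => ?_
    obtain ⟨d, hd⟩ : e ∈ Set.range coneExponent := range_coneExponent ▸ hf he
    exact (AlgHom.mem_range _).2 ⟨monomial d (coeff e f), by rw [coneMap_monomial, hd]⟩

def coneRingEquivInvariants3 : ConeRing ≃ₐ[ℂ] invariants3 :=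
  (Ideal.quotientEquivAlgOfEq ℂ ker_coneMap.symm).trans
    ((Ideal.quotientKerEquivRange (coneMap ℂ)).trans (Subalgebra.equivOfEq _ _ range_coneMap))

theorem zhu_algebra_of_Z3_orbifold_relations
    (I : Ideal (MvPolynomial (Fin 8) ℂ))
    (h1 : (MvPolynomial.X 3 : MvPolynomial (Fin 8) ℂ) ^ 2 ∈ I)
    (h2 : (MvPolynomial.X 2 : MvPolynomial (Fin 8) ℂ) ^ 3 ∈ I)
    (h3 : (MvPolynomial.X 1 : MvPolynomial (Fin 8) ℂ) ^ 3
        - (8 / 27 : ℂ) • (MvPolynomial.X 0 * MvPolynomial.X 1 * MvPolynomial.X 2)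
        + (1 / 108 : ℂ) • ((MvPolynomial.X 0) ^ 2 * MvPolynomial.X 3)
        - (1 / 1296 : ℂ) • (MvPolynomial.X 2 * MvPolynomial.X 3) ∈ I)
    (h4 : (MvPolynomial.X 6 : MvPolynomial (Fin 8) ℂ) ^ 2 ∈ I)
    (h5 : (MvPolynomial.X 7 : MvPolynomial (Fin 8) ℂ) ^ 2 ∈ I)
    (h6 : (MvPolynomial.X 4 : MvPolynomial (Fin 8) ℂ) * MvPolynomial.X 5
        + (117 : ℂ) • (MvPolynomial.X 1) ^ 2
        - (33 : ℂ) • (MvPolynomial.X 0 * MvPolynomial.X 2)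
        - (MvPolynomial.X 0) ^ 3 ∈ I) :
    -- `W³, W⁴, W⁵, C⁵, D⁵` are nilpotent in `R`:
    (IsNilpotent (Ideal.Quotient.mk I (MvPolynomial.X 1)) ∧
     IsNilpotent (Ideal.Quotient.mk I (MvPolynomial.X 2)) ∧
     IsNilpotent (Ideal.Quotient.mk I (MvPolynomial.X 3)) ∧
     IsNilpotent (Ideal.Quotient.mk I (MvPolynomial.X 6)) ∧
     IsNilpotent (Ideal.Quotient.mk I (MvPolynomial.X 7))) ∧
    -- modulo the nilradical, `C³ D³ = L³`:
    Ideal.Quotient.mk I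
        (MvPolynomial.X 4 * MvPolynomial.X 5 - (MvPolynomial.X 0) ^ 3) ∈
      nilradical (MvPolynomial (Fin 8) ℂ ⧸ I) ∧
    -- if `R/nilradical ≅ ℂ[x,y,z]/(yz - x³)`, then it is isomorphic to
    -- `ℂ[β¹,β²]^{ℤ/3ℤ}`:
    (Nonempty (((MvPolynomial (Fin 8) ℂ ⧸ I) ⧸
          nilradical (MvPolynomial (Fin 8) ℂ ⧸ I)) ≃ₐ[ℂ] ConeRing) →
      Nonempty (((MvPolynomial (Fin 8) ℂ ⧸ I) ⧸
          nilradical (MvPolynomial (Fin 8) ℂ ⧸ I)) ≃ₐ[ℂ] invariants3)) := by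
  have e₃ : Ideal.Quotient.mkₐ ℂ I _ = 0 := Ideal.Quotient.eq_zero_iff_mem.2 h3
  have e₆ : Ideal.Quotient.mkₐ ℂ I _ = 0 := Ideal.Quotient.eq_zero_iff_mem.2 h6
  simp only [map_sub, map_add, map_smul, map_mul, map_pow] at e₃ e₆
  rw [Ideal.Quotient.mkₐ_eq_mk] at e₃ e₆
  have hW₄ := isNilpotent_mk_of_pow_mem h2
  have hW₅ := isNilpotent_mk_of_pow_mem h1
  have hW₃ : IsNilpotent (Ideal.Quotient.mk I (X 1)) :=
    (mem_nilradical.1 <| span_le_nilradical (by simp [hW₄, hW₅])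
      (pow_three_mem_span_pair_of_relation _ _ _ e₃)).of_pow
  refine ⟨⟨hW₃, hW₄, hW₅, isNilpotent_mk_of_pow_mem h4, isNilpotent_mk_of_pow_mem h5⟩, ?_,
    fun ⟨e⟩ => ⟨e.trans coneRingEquivInvariants3⟩⟩
  rw [map_sub, map_mul, map_pow]
  exact span_le_nilradical (by simp [hW₃, hW₄])
    (mul_sub_pow_three_mem_span_pair_of_relation _ _ e₆)

end
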